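/- arXiv:2605.08944 — 4 statements merged into one kernel-verified Lean document; each statement's English description precedes it below -/
import Mathlib

section
/- Let τ₁, σ₁, τ₂, σ₂ ≥ 0 and ρ₁, ρ₂ ∈ [0, +∞]. Set f = (δ_{τ₁} ⊗ I_{σ₁} ⊗ γ_{0,ρ₁}) ∧ δ_0 and g = (δ_{τ₂} ⊗ I_{σ₂} ⊗ γ_{0,ρ₂}) ∧ δ_0. Then f ⊗ g = f ∧ g ∧ ((δ_{τ₁+τ₂} ⊗ I_{σ₁+σ₂} ⊗ γ_{0,ρ₁}) ∧ δ_0) ∧ ((δ_{τ₁+τ₂} ⊗ I_{σ₁+σ₂} ⊗ γ_{0,ρ₂}) ∧ δ_0). In particular, the convolution of two MSLC curves with a single step each is again an MSLC curve. -/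
open scoped ENNReal
open Classical

noncomputable section

/-- Burst-delay function `δ_T`: `0` for `t ≤ T`, `+∞` for `t > T`. -/
def bdelay (T : ℝ) : ℝ → ℝ≥0∞ := fun t => if t ≤ T then 0 else ⊤

/-- Window function `I_w`: `w` at `t = 0`, `+∞` for `t > 0` (and `0` for `t < 0`). -/
def wndw (w : ℝ≥0∞) : ℝ → ℝ≥0∞ := fun t => if t < 0 then 0 else if t = 0 then w else ⊤

/-- Token-bucket curve `γ_{b,r}`: `b + r·t` for `t > 0`, `0` for `t ≤ 0`. -/
def tbkt (b r : ℝ≥0∞) : ℝ → ℝ≥0∞ := fun t => if t ≤ 0 then 0 else b + r * ENNReal.ofReal t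

/-- Min-plus convolution `(f ⊗ g)(t) = inf_{0 ≤ u ≤ t} (f(t − u) + g(u))` for `t ≥ 0`,
extended by `0` on negative times. -/
def mconv (f g : ℝ → ℝ≥0∞) : ℝ → ℝ≥0∞ :=
  fun t => if t < 0 then 0 else ⨅ u ∈ Set.Icc (0 : ℝ) t, (f (t - u) + g u)

/-- The basic MSLC building block `(δ_τ ⊗ I_σ ⊗ γ_{0,ρ}) ∧ δ_0`. -/
def mslcStep (τ : ℝ) (σ ρ : ℝ≥0∞) : ℝ → ℝ≥0∞ :=
  mconv (mconv (bdelay τ) (wndw σ)) (tbkt 0 ρ) ⊓ bdelay 0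

/-- Horizontal deviation (delay bound):
`hdev(α, β) = sup_{t ≥ 0} inf { d ≥ 0 : α(t − d) ≤ β(t) }`. -/
def hdev (α β : ℝ → ℝ≥0∞) : ℝ≥0∞ :=
  ⨆ t ∈ Set.Ici (0 : ℝ), ⨅ d ∈ {d : ℝ | 0 ≤ d ∧ α (t - d) ≤ β t}, ENNReal.ofReal d

/-- Vertical deviation (backlog bound): `vdev(α, β) = sup_{u ≥ 0} (α(u) − β(u))`
with truncated subtraction (so `x − (+∞) = 0`). -/
def vdev (α β : ℝ → ℝ≥0∞) : ℝ≥0∞ :=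
  ⨆ u ∈ Set.Ici (0 : ℝ), (α u - β u)

/-- Min-plus deconvolution `(f ⊘ g)(t) = sup_{u ≥ 0} (f(t + u) − g(u))`. -/
def mdeconv (f g : ℝ → ℝ≥0∞) : ℝ → ℝ≥0∞ :=
  fun t => ⨆ u ∈ Set.Ici (0 : ℝ), (f (t + u) - g u)

/-- FIFO leftover `(β ⊖_θ α)(t) = [β(t) − α(t − θ)]⁺` for `t > θ`, `0` for `t ≤ θ`. -/
def leftover (β α : ℝ → ℝ≥0∞) (θ : ℝ) : ℝ → ℝ≥0∞ :=
  fun t => if t ≤ θ then 0 else β t - α (t - θ)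

/-- Nondecreasing lower bound `f↑(t) = inf_{u ≥ t} f(u)`. -/
def ndlb (f : ℝ → ℝ≥0∞) : ℝ → ℝ≥0∞ := fun t => ⨅ u ∈ Set.Ici t, f u

/-!
For `τ ≥ 0` the curve `(δ_τ ⊗ I_σ ⊗ γ_{0,ρ}) ∧ δ_0` is `t ↦ σ + ρ (t - τ)⁺` on `t > 0`. In the
convolution of two such curves the splits `u = 0` and `u = t` give the two curves themselves, while
an interior split `0 < u < t` costs `σ₁ + σ₂ + ρ₁ (t - u - τ₁)⁺ + ρ₂ (u - τ₂)⁺`, which is at least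
`σ₁ + σ₂ + min ρ₁ ρ₂ · (t - τ₁ - τ₂)⁺` because `(a + b)⁺ ≤ a⁺ + b⁺`; the splits `u = τ₂` and
`u = t - τ₁` attain the two branches of this minimum.
-/

section MinPlus

variable {f g : ℝ → ℝ≥0∞} {t : ℝ}

theorem mconv_of_neg (f g : ℝ → ℝ≥0∞) (ht : t < 0) : mconv f g t = 0 := if_pos ht

theorem mconv_of_nonneg (f g : ℝ → ℝ≥0∞) (ht : 0 ≤ t) :
    mconv f g t = ⨅ u ∈ Set.Icc (0 : ℝ) t, (f (t - u) + g u) := if_neg ht.not_gt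

theorem mconv_le_of_mem {u : ℝ} (hu : u ∈ Set.Icc 0 t) : mconv f g t ≤ f (t - u) + g u := by
  rw [mconv_of_nonneg f g (hu.1.trans hu.2)]
  exact iInf₂_le u hu

theorem mconv_comm (f g : ℝ → ℝ≥0∞) : mconv f g = mconv g f := by
  have key : ∀ (f g : ℝ → ℝ≥0∞) (t : ℝ), mconv f g t ≤ mconv g f t := by
    intro f g t
    rcases lt_or_ge t 0 with ht | ht
    · rw [mconv_of_neg f g ht]
      exact zero_le
    rw [mconv_of_nonneg g f ht]
    refine le_iInf₂ fun u hu => ?_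
    have hu' : t - u ∈ Set.Icc 0 t := ⟨sub_nonneg.2 hu.2, sub_le_self t hu.1⟩
    simpa only [sub_sub_cancel, add_comm] using mconv_le_of_mem (f := f) (g := g) hu'
  exact funext fun t => le_antisymm (key f g t) (key g f t)

theorem mconv_le_left (hg : g 0 = 0) (t : ℝ) : mconv f g t ≤ f t := by
  rcases lt_or_ge t 0 with ht | ht
  · simp [mconv_of_neg f g ht]
  · simpa [hg] using mconv_le_of_mem (f := f) (g := g) ⟨le_rfl, ht⟩

theorem mconv_le_right (hf : f 0 = 0) (t : ℝ) : mconv f g t ≤ g t :=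
  mconv_comm f g ▸ mconv_le_left hf t

theorem mconv_wndw_of_nonneg (f : ℝ → ℝ≥0∞) (σ : ℝ≥0∞) (ht : 0 ≤ t) :
    mconv f (wndw σ) t = f t + σ := by
  apply le_antisymm
  · simpa [wndw] using mconv_le_of_mem (f := f) (g := wndw σ) ⟨le_rfl, ht⟩
  · rw [mconv_of_nonneg _ _ ht]
    refine le_iInf₂ fun u hu => ?_
    rcases hu.1.eq_or_lt with rfl | hu0
    · simp [wndw]
    · simp [wndw, hu0.ne', hu0.not_gt]

end MinPlus

theorem tbkt_zero (ρ : ℝ≥0∞) : tbkt 0 ρ = fun t => ρ * ENNReal.ofReal t := by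
  funext t
  unfold tbkt
  split_ifs with ht
  · rw [ENNReal.ofReal_of_nonpos ht, mul_zero]
  · rw [zero_add]

theorem mconv_bdelay_wndw_tbkt_of_nonneg {τ : ℝ} (hτ : 0 ≤ τ) (σ ρ : ℝ≥0∞) {t : ℝ}
    (ht : 0 ≤ t) :
    mconv (mconv (bdelay τ) (wndw σ)) (tbkt 0 ρ) t = σ + ρ * ENNReal.ofReal (t - τ) := by
  rw [tbkt_zero]
  apply le_antisymm
  · have hu : max (t - τ) 0 ∈ Set.Icc 0 t := ⟨le_max_right _ _, max_le (by linarith) ht⟩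
    refine (mconv_le_of_mem hu).trans_eq ?_
    have hdelay : t - max (t - τ) 0 ≤ τ := by linarith [le_max_left (t - τ) 0]
    rw [mconv_wndw_of_nonneg _ _ (sub_nonneg.2 hu.2), bdelay, if_pos hdelay, zero_add,
      ENNReal.ofReal_max, ENNReal.ofReal_zero, max_eq_left zero_le]
  · rw [mconv_of_nonneg _ _ ht]
    refine le_iInf₂ fun u hu => ?_
    rw [mconv_wndw_of_nonneg _ _ (sub_nonneg.2 hu.2), bdelay]
    split_ifs with hdelay
    · rw [zero_add]
      gcongr σ + ρ * ?_
      exact ENNReal.ofReal_le_ofReal (by linarith)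
    · simp

/-- `ENNReal.ofReal` truncates at `0`, so the curve is flat at height `σ` on `(0, τ]`. -/
def stepCurve (τ : ℝ) (σ ρ : ℝ≥0∞) : ℝ → ℝ≥0∞ := fun t =>
  if t ≤ 0 then 0 else σ + ρ * ENNReal.ofReal (t - τ)

theorem mslcStep_eq_stepCurve {τ : ℝ} (hτ : 0 ≤ τ) (σ ρ : ℝ≥0∞) :
    mslcStep τ σ ρ = stepCurve τ σ ρ := by
  funext t
  simp only [mslcStep, stepCurve, Pi.inf_apply, bdelay]
  split_ifs with ht
  · exact inf_bot_eq _
  · rw [inf_top_eq, mconv_bdelay_wndw_tbkt_of_nonneg hτ σ ρ (by linarith)]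

section StepCurve

variable {τ τ₁ τ₂ : ℝ} {σ σ₁ σ₂ ρ ρ₁ ρ₂ : ℝ≥0∞} {t : ℝ}

theorem stepCurve_of_nonpos (ht : t ≤ 0) : stepCurve τ σ ρ t = 0 := if_pos ht

theorem stepCurve_of_pos (ht : 0 < t) : stepCurve τ σ ρ t = σ + ρ * ENNReal.ofReal (t - τ) :=
  if_neg ht.not_ge

theorem stepCurve_le : stepCurve τ σ ρ t ≤ σ + ρ * ENNReal.ofReal (t - τ) := by
  unfold stepCurve
  split_ifs <;> simp

theorem inf_mul_ofReal_add_le (ρ₁ ρ₂ : ℝ≥0∞) (x y : ℝ) :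
    ρ₁ * ENNReal.ofReal (x + y) ⊓ ρ₂ * ENNReal.ofReal (x + y)
      ≤ ρ₁ * ENNReal.ofReal x + ρ₂ * ENNReal.ofReal y :=
  calc ρ₁ * ENNReal.ofReal (x + y) ⊓ ρ₂ * ENNReal.ofReal (x + y)
      = (ρ₁ ⊓ ρ₂) * ENNReal.ofReal (x + y) := min_mul_mul_right ρ₁ ρ₂ _
    _ ≤ (ρ₁ ⊓ ρ₂) * (ENNReal.ofReal x + ENNReal.ofReal y) := by
      gcongr
      exact ENNReal.ofReal_add_le
    _ ≤ ρ₁ * ENNReal.ofReal x + ρ₂ * ENNReal.ofReal y := by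
      rw [mul_add]
      gcongr
      exacts [inf_le_left, inf_le_right]

theorem mconv_stepCurve_le_merged (h₁ : 0 ≤ τ₁) (h₂ : 0 ≤ τ₂) (t : ℝ) :
    mconv (stepCurve τ₁ σ₁ ρ₁) (stepCurve τ₂ σ₂ ρ₂) t
      ≤ stepCurve (τ₁ + τ₂) (σ₁ + σ₂) ρ₁ t := by
  rcases le_or_gt t 0 with ht | ht
  · rw [stepCurve_of_nonpos ht, ← stepCurve_of_nonpos (τ := τ₁) (σ := σ₁) (ρ := ρ₁) ht]
    exact mconv_le_left (stepCurve_of_nonpos le_rfl) t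
  have hu : min τ₂ t ∈ Set.Icc 0 t := ⟨le_min h₂ ht.le, min_le_right _ _⟩
  have hfirst : ENNReal.ofReal (t - min τ₂ t - τ₁) ≤ ENNReal.ofReal (t - (τ₁ + τ₂)) := by
    rw [ENNReal.ofReal_le_ofReal_iff']
    rcases min_cases τ₂ t with ⟨h, -⟩ | ⟨h, -⟩
    · left; linarith
    · right; linarith
  calc mconv (stepCurve τ₁ σ₁ ρ₁) (stepCurve τ₂ σ₂ ρ₂) t
      ≤ stepCurve τ₁ σ₁ ρ₁ (t - min τ₂ t) + stepCurve τ₂ σ₂ ρ₂ (min τ₂ t) := mconv_le_of_mem hu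
    _ ≤ (σ₁ + ρ₁ * ENNReal.ofReal (t - min τ₂ t - τ₁))
          + (σ₂ + ρ₂ * ENNReal.ofReal (min τ₂ t - τ₂)) := add_le_add stepCurve_le stepCurve_le
    _ ≤ (σ₁ + ρ₁ * ENNReal.ofReal (t - (τ₁ + τ₂))) + σ₂ := by
      rw [ENNReal.ofReal_of_nonpos (p := min τ₂ t - τ₂) (by linarith [min_le_left τ₂ t]),
        mul_zero, add_zero]
      gcongr σ₁ + ρ₁ * ?_ + σ₂
    _ = stepCurve (τ₁ + τ₂) (σ₁ + σ₂) ρ₁ t := by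
      rw [stepCurve_of_pos ht]
      ring

theorem inf_le_mconv_stepCurve (t : ℝ) :
    stepCurve τ₁ σ₁ ρ₁ t ⊓ stepCurve τ₂ σ₂ ρ₂ t ⊓ stepCurve (τ₁ + τ₂) (σ₁ + σ₂) ρ₁ t
        ⊓ stepCurve (τ₁ + τ₂) (σ₁ + σ₂) ρ₂ t
      ≤ mconv (stepCurve τ₁ σ₁ ρ₁) (stepCurve τ₂ σ₂ ρ₂) t := by
  rcases le_or_gt t 0 with ht | ht
  · exact (inf_le_left.trans (inf_le_left.trans inf_le_left)).trans
      ((stepCurve_of_nonpos ht).trans_le zero_le)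
  rw [mconv_of_nonneg _ _ ht.le]
  refine le_iInf₂ fun u hu => ?_
  rcases hu.1.eq_or_lt with rfl | hu0
  · rw [sub_zero, stepCurve_of_nonpos le_rfl, add_zero]
    exact inf_le_left.trans (inf_le_left.trans inf_le_left)
  rcases hu.2.eq_or_lt with rfl | hut
  · rw [sub_self, stepCurve_of_nonpos le_rfl, zero_add]
    exact inf_le_left.trans (inf_le_left.trans inf_le_right)
  have hsplit : t - (τ₁ + τ₂) = (t - u - τ₁) + (u - τ₂) := by ring
  calc _ ≤ stepCurve (τ₁ + τ₂) (σ₁ + σ₂) ρ₁ t ⊓ stepCurve (τ₁ + τ₂) (σ₁ + σ₂) ρ₂ t :=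
        inf_le_inf_right _ inf_le_right
    _ = σ₁ + σ₂ + (ρ₁ * ENNReal.ofReal ((t - u - τ₁) + (u - τ₂))
          ⊓ ρ₂ * ENNReal.ofReal ((t - u - τ₁) + (u - τ₂))) := by
      rw [stepCurve_of_pos ht, stepCurve_of_pos ht, add_min, hsplit]
    _ ≤ σ₁ + σ₂ + (ρ₁ * ENNReal.ofReal (t - u - τ₁) + ρ₂ * ENNReal.ofReal (u - τ₂)) :=
      add_le_add_right (inf_mul_ofReal_add_le ρ₁ ρ₂ _ _) _
    _ = stepCurve τ₁ σ₁ ρ₁ (t - u) + stepCurve τ₂ σ₂ ρ₂ u := by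
      rw [stepCurve_of_pos (sub_pos.2 hut), stepCurve_of_pos hu0]
      ring

theorem mconv_stepCurve (h₁ : 0 ≤ τ₁) (h₂ : 0 ≤ τ₂) :
    mconv (stepCurve τ₁ σ₁ ρ₁) (stepCurve τ₂ σ₂ ρ₂)
      = stepCurve τ₁ σ₁ ρ₁ ⊓ stepCurve τ₂ σ₂ ρ₂ ⊓ stepCurve (τ₁ + τ₂) (σ₁ + σ₂) ρ₁
        ⊓ stepCurve (τ₁ + τ₂) (σ₁ + σ₂) ρ₂ := by
  funext t
  simp only [Pi.inf_apply]
  refine le_antisymm (le_inf (le_inf (le_inf ?_ ?_) ?_) ?_) (inf_le_mconv_stepCurve t)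
  · exact mconv_le_left (stepCurve_of_nonpos le_rfl) t
  · exact mconv_le_right (stepCurve_of_nonpos le_rfl) t
  · exact mconv_stepCurve_le_merged h₁ h₂ t
  · rw [mconv_comm, add_comm τ₁, add_comm σ₁]
    exact mconv_stepCurve_le_merged h₂ h₁ t

end StepCurve

theorem stmt2_general (tau1 sig1 tau2 sig2 : ℝ) (htau1 : 0 ≤ tau1)
    (htau2 : 0 ≤ tau2) (rho1 rho2 : ℝ≥0∞) :
    mconv (mslcStep tau1 (ENNReal.ofReal sig1) rho1) (mslcStep tau2 (ENNReal.ofReal sig2) rho2)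
      = mslcStep tau1 (ENNReal.ofReal sig1) rho1 ⊓ mslcStep tau2 (ENNReal.ofReal sig2) rho2
        ⊓ mslcStep (tau1 + tau2) (ENNReal.ofReal sig1 + ENNReal.ofReal sig2) rho1
        ⊓ mslcStep (tau1 + tau2) (ENNReal.ofReal sig1 + ENNReal.ofReal sig2) rho2 := by
  simp only [mslcStep_eq_stepCurve htau1, mslcStep_eq_stepCurve htau2,
    mslcStep_eq_stepCurve (add_nonneg htau1 htau2)]
  exact mconv_stepCurve htau1 htau2

/-- convolution of two single-step MSLC curves. -/
theorem stmt2 (tau1 sig1 tau2 sig2 : ℝ) (htau1 : 0 ≤ tau1) (hsig1 : 0 ≤ sig1)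
    (htau2 : 0 ≤ tau2) (hsig2 : 0 ≤ sig2) (rho1 rho2 : ℝ≥0∞) :
    mconv (mslcStep tau1 (ENNReal.ofReal sig1) rho1) (mslcStep tau2 (ENNReal.ofReal sig2) rho2)
      = mslcStep tau1 (ENNReal.ofReal sig1) rho1 ⊓ mslcStep tau2 (ENNReal.ofReal sig2) rho2
        ⊓ mslcStep (tau1 + tau2) (ENNReal.ofReal sig1 + ENNReal.ofReal sig2) rho1
        ⊓ mslcStep (tau1 + tau2) (ENNReal.ofReal sig1 + ENNReal.ofReal sig2) rho2 :=
  stmt2_general tau1 sig1 tau2 sig2 htau1 htau2 rho1 rho2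
end
end

section
/- Let α be a nondecreasing function (an arrival curve) and let β₁, …, β_n be service curves. Then hdev(α, min_{i=1..n} β_i) = max_{i=1..n} hdev(α, β_i). -/
open scoped ENNReal
open Classical

noncomputable section

/-- `hdev(α, min_i β_i) = max_i hdev(α, β_i)`. -/
theorem stmt5 (n : ℕ) (hn : 0 < n) (α : ℝ → ℝ≥0∞) (hα : Monotone α)
    (hα0 : ∀ t ≤ (0 : ℝ), α t = 0) (β : Fin n → ℝ → ℝ≥0∞)
    (hβ0 : ∀ i, ∀ t ≤ (0 : ℝ), β i t = 0) :
    hdev α (⨅ i, β i) = ⨆ i, hdev α (β i) := by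
  have hne : Nonempty (Fin n) := Fin.pos_iff_nonempty.mp hn
  have key : ∀ t : ℝ, t ∈ Set.Ici (0:ℝ) →
      (⨅ d ∈ {d : ℝ | 0 ≤ d ∧ α (t - d) ≤ (⨅ i, β i) t}, ENNReal.ofReal d)
      = ⨆ i, ⨅ d ∈ {d : ℝ | 0 ≤ d ∧ α (t - d) ≤ β i t}, ENNReal.ofReal d := by
    intro t ht
    have hset : ∀ d : ℝ, (d ∈ {d : ℝ | 0 ≤ d ∧ α (t - d) ≤ (⨅ i, β i) t}) ↔
        (0 ≤ d ∧ ∀ i, α (t - d) ≤ β i t) := by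
      intro d
      simp [Set.mem_setOf_eq, iInf_apply, le_iInf_iff]
    refine le_antisymm ?_ ?_
    · set M := ⨆ i, ⨅ d ∈ {d : ℝ | 0 ≤ d ∧ α (t - d) ≤ β i t}, ENNReal.ofReal d with hM
      refine ENNReal.le_of_forall_pos_le_add ?_
      intro ε hε hMlt
      set c : ℝ := M.toReal + ε with hc
      have hc0 : 0 ≤ c := add_nonneg ENNReal.toReal_nonneg (le_of_lt hε)
      have hMc : ENNReal.ofReal c = M + ε := by
        rw [hc, ENNReal.ofReal_add ENNReal.toReal_nonneg ε.coe_nonneg,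
          ENNReal.ofReal_toReal hMlt.ne, ENNReal.ofReal_coe_nnreal]
      have hMltc : M < ENNReal.ofReal c := by
        rw [hMc]
        exact ENNReal.lt_add_right hMlt.ne (by exact_mod_cast hε.ne')
      have hmem : c ∈ {d : ℝ | 0 ≤ d ∧ α (t - d) ≤ (⨅ i, β i) t} := by
        rw [hset]
        refine ⟨hc0, fun i => ?_⟩
        have hi : (⨅ d ∈ {d : ℝ | 0 ≤ d ∧ α (t - d) ≤ β i t}, ENNReal.ofReal d)
            < ENNReal.ofReal c := lt_of_le_of_lt (le_iSup (fun j => ⨅ d ∈ {d : ℝ | 0 ≤ d ∧ α (t - d) ≤ β j t}, ENNReal.ofReal d) i) hMltc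
        obtain ⟨d, hdlt⟩ := iInf_lt_iff.mp hi
        simp only [Set.mem_setOf_eq] at hdlt
        have hdQ : 0 ≤ d ∧ α (t - d) ≤ β i t := by
          by_contra h
          rw [iInf_neg h] at hdlt
          exact absurd hdlt (by simp)
        have hdc : ENNReal.ofReal d < ENNReal.ofReal c := by
          simpa [hdQ] using hdlt
        obtain ⟨hd0, hdle⟩ := hdQ
        have hdc' : d < c := by
          by_contra h
          exact absurd (ENNReal.ofReal_le_ofReal (not_lt.mp h)) (not_le.mpr hdc)
        exact le_trans (hα (by linarith)) hdle
      calc (⨅ d ∈ {d : ℝ | 0 ≤ d ∧ α (t - d) ≤ (⨅ i, β i) t}, ENNReal.ofReal d)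
          ≤ ENNReal.ofReal c := biInf_le _ hmem
        _ = M + ε := hMc
    · refine iSup_le fun i => ?_
      refine le_iInf₂ fun d hd => ?_
      rw [hset] at hd
      exact biInf_le _ ⟨hd.1, hd.2 i⟩
  unfold hdev
  rw [biSup_congr key]
  rw [show (⨆ t ∈ Set.Ici (0:ℝ), ⨆ i,
      ⨅ d ∈ {d : ℝ | 0 ≤ d ∧ α (t - d) ≤ β i t}, ENNReal.ofReal d)
      = ⨆ t : ℝ, ⨆ i, ⨆ _ : t ∈ Set.Ici (0:ℝ),
      ⨅ d ∈ {d : ℝ | 0 ≤ d ∧ α (t - d) ≤ β i t}, ENNReal.ofReal d from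
    iSup_congr fun t => iSup_comm]
  exact iSup_comm
end
end

section
/- Let 0 ≤ L ≤ b, 0 < r < R' < ∞, τ₁ ≥ 0 and σ₁ ≥ 0. Let α = γ_{b,r} ∧ γ_{L,R'} and let β = (δ_{τ₁} ⊗ I_{σ₁} ⊗ γ_{0,+∞}) ∧ δ_0 (the function equal to 0 at 0, to σ₁ for 0 < t ≤ τ₁, and to +∞ for t > τ₁), and write Y = ((b−L)/(R'−r))·r + b. Then hdev(α, β) = max( 0, τ₁·1{σ₁ ≥ Y} − [σ₁ − b]⁺/r, τ₁·1{Y ≥ σ₁} − [σ₁ − L]⁺/R' ), where [x]⁺ = max(x, 0) and 1{C} is 1 if condition C holds and 0 otherwise. -/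
open scoped ENNReal
open Classical

noncomputable section

/-!
With infinite rate the service curve `β` is the step function equal to `0` on `(-∞, 0]`, to `σ₁`
on `(0, τ₁]` and to `+∞` beyond, so the only binding time is `t = τ₁` and the delay is
`[τ₁ - S]⁺`, where `α ≤ σ₁` exactly on `(-∞, S]`. For the minimum of two token
buckets `S = max ([σ₁ - b]⁺ / r) ([σ₁ - L]⁺ / R')`, and which of the two terms is larger is decided
by comparing `σ₁` with the height `Y` of the inflection point of `α`.
-/

lemma mconv_apply_of_eq_top {f g : ℝ → ℝ≥0∞} (hg : ∀ u, 0 < u → g u = ⊤) {t : ℝ}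
    (ht : 0 ≤ t) : mconv f g t = f t + g 0 := by
  rw [mconv, if_neg ht.not_gt]
  refine le_antisymm (iInf₂_le_of_le 0 ⟨le_rfl, ht⟩ (by rw [sub_zero])) ?_
  refine le_iInf₂ fun u hu => ?_
  rcases hu.1.eq_or_lt with rfl | hu0
  · rw [sub_zero]
  · rw [hg u hu0, add_top]
    exact le_top

lemma mslcStep_top_apply (τ : ℝ) (σ : ℝ≥0∞) (t : ℝ) :
    mslcStep τ σ ⊤ t = if t ≤ 0 then 0 else if t ≤ τ then σ else ⊤ := by
  have hwndw : ∀ u, 0 < u → wndw σ u = ⊤ := fun u hu => by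
    simp [wndw, hu.not_gt, hu.ne']
  have htbkt : ∀ u, 0 < u → tbkt 0 ⊤ u = ⊤ := fun u hu => by
    simp [tbkt, hu.not_ge, ENNReal.top_mul (ENNReal.ofReal_pos.2 hu).ne']
  rw [mslcStep, Pi.inf_apply]
  split_ifs with h0 hτ
  · simp [bdelay, h0]
  all_goals
    push Not at h0
    rw [mconv_apply_of_eq_top htbkt h0.le, mconv_apply_of_eq_top hwndw h0.le]
    simp [bdelay, wndw, tbkt, h0.not_ge, *]

lemma hdev_mslcStep_top {α : ℝ → ℝ≥0∞} {τ S : ℝ} {σ : ℝ≥0∞}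
    (hα0 : ∀ s, s ≤ 0 → α s = 0) (hαS : ∀ s, α s ≤ σ ↔ s ≤ S) :
    hdev α (mslcStep τ σ ⊤) = ENNReal.ofReal (τ - S) := by
  have hβ := mslcStep_top_apply τ σ
  apply le_antisymm
  · refine iSup₂_le fun t _ => ?_
    by_cases hτ : 0 < t ∧ t ≤ τ
    · -- delaying by `[t - S]⁺` brings `t - d` down to `min t S`
      refine iInf₂_le_of_le (max (t - S) 0) ⟨le_max_right _ _, ?_⟩ ?_
      · rw [hβ, if_neg hτ.1.not_ge, if_pos hτ.2, hαS]
        rw [max_def]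
        split_ifs <;> linarith
      · rw [ENNReal.ofReal_max, ENNReal.ofReal_zero, max_eq_left zero_le]
        exact ENNReal.ofReal_le_ofReal (by linarith [hτ.2])
    · refine iInf₂_le_of_le 0 ⟨le_rfl, ?_⟩ (by simp)
      rw [sub_zero, hβ]
      split_ifs with h0 htτ
      · exact (hα0 t h0).le
      · exact absurd ⟨lt_of_not_ge h0, htτ⟩ hτ
      · exact le_top
  · rcases le_or_gt τ S with hτS | hSτ
    · simp [ENNReal.ofReal_of_nonpos (sub_nonpos.2 hτS)]
    have hS : 0 ≤ S := (hαS 0).1 ((hα0 0 le_rfl).trans_le zero_le)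
    have hτ : 0 < τ := hS.trans_lt hSτ
    refine le_iSup₂_of_le τ hτ.le (le_iInf₂ fun d hd => ENNReal.ofReal_le_ofReal ?_)
    have := (hαS _).1 (by simpa [hβ, hτ.not_ge] using hd.2)
    linarith

lemma tbkt_ofReal_le_ofReal_iff {b r : ℝ} (hb : 0 ≤ b) (hr : 0 < r) (σ s : ℝ) :
    tbkt (ENNReal.ofReal b) (ENNReal.ofReal r) s ≤ ENNReal.ofReal σ ↔ s ≤ max (σ - b) 0 / r := by
  rcases le_or_gt s 0 with hs | hs
  · simp only [tbkt, if_pos hs, zero_le, true_iff]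
    exact hs.trans (by positivity)
  have hpos : 0 < b + r * s := by positivity
  rw [tbkt, if_neg hs.not_ge, ← ENNReal.ofReal_mul hr.le, ← ENNReal.ofReal_add hb (by positivity),
    ENNReal.ofReal_le_ofReal_iff', or_iff_left hpos.not_ge, le_div_iff₀ hr, le_max_iff,
    or_iff_left (by nlinarith)]
  constructor <;> intro h <;> linarith

section InflectionPoint

variable {L b r R' σ : ℝ}

lemma posPart_sub_div_le_of_le_inflection (hLb : L ≤ b) (hr : 0 < r) (hrR : r < R')
    (hσ : σ ≤ (b - L) / (R' - r) * r + b) :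
    max (σ - b) 0 / r ≤ max (σ - L) 0 / R' := by
  have hR' : 0 < R' := hr.trans hrR
  rcases le_total σ b with hσb | hbσ
  · rw [max_eq_right (by linarith), zero_div]
    positivity
  rw [max_eq_left (by linarith), max_eq_left (by linarith), div_le_div_iff₀ hr hR']
  have : (σ - b) * (R' - r) ≤ (b - L) * r := by
    rw [← le_div_iff₀ (by linarith)]
    rw [div_mul_eq_mul_div] at hσ
    linarith
  nlinarith

lemma posPart_sub_div_le_of_inflection_le (hLb : L ≤ b) (hr : 0 < r) (hrR : r < R')
    (hσ : (b - L) / (R' - r) * r + b ≤ σ) :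
    max (σ - L) 0 / R' ≤ max (σ - b) 0 / r := by
  have hR' : 0 < R' := hr.trans hrR
  have hbY : 0 ≤ (b - L) / (R' - r) * r :=
    mul_nonneg (div_nonneg (sub_nonneg.2 hLb) (sub_nonneg.2 hrR.le)) hr.le
  rw [max_eq_left (by linarith), max_eq_left (by linarith), div_le_div_iff₀ hR' hr]
  have : (b - L) * r ≤ (σ - b) * (R' - r) := by
    rw [← div_le_iff₀ (by linarith)]
    rw [div_mul_eq_mul_div] at hσ
    linarith
  nlinarith

end InflectionPoint

lemma max_zero_max_sub_ite {τ A B x y : ℝ} (hA : 0 ≤ A) (hB : 0 ≤ B) (hxy : x ≤ y → A ≤ B)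
    (hyx : y ≤ x → B ≤ A) :
    max 0 (max (τ * (if y ≤ x then 1 else 0) - A) (τ * (if x ≤ y then 1 else 0) - B))
      = max 0 (τ - max A B) := by
  rcases lt_trichotomy x y with h | rfl | h
  · rw [if_neg h.not_ge, if_pos h.le, max_eq_right (hxy h.le)]
    simp only [max_def]
    split_ifs <;> linarith
  · rw [if_pos le_rfl, le_antisymm (hxy le_rfl) (hyx le_rfl), max_self]
    simp
  · rw [if_pos h.le, if_neg h.not_ge, max_eq_left (hyx h.le)]
    simp only [max_def]
    split_ifs <;> linarith

theorem stmt7_general (L b r R' tau1 sig1 : ℝ)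
    (hL : 0 ≤ L) (hLb : L ≤ b) (hr : 0 < r) (hrR : r < R') :
    hdev (tbkt (ENNReal.ofReal b) (ENNReal.ofReal r)
            ⊓ tbkt (ENNReal.ofReal L) (ENNReal.ofReal R'))
         (mslcStep tau1 (ENNReal.ofReal sig1) ⊤)
      = ENNReal.ofReal
          (max 0 (max
            (tau1 * (if (b - L) / (R' - r) * r + b ≤ sig1 then 1 else 0)
              - max (sig1 - b) 0 / r)
            (tau1 * (if sig1 ≤ (b - L) / (R' - r) * r + b then 1 else 0)
              - max (sig1 - L) 0 / R'))) := by
  have hR' : 0 < R' := hr.trans hrR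
  set α := tbkt (ENNReal.ofReal b) (ENNReal.ofReal r) ⊓ tbkt (ENNReal.ofReal L) (ENNReal.ofReal R')
  have hα0 : ∀ s : ℝ, s ≤ 0 → α s = 0 := fun s hs => by
    simp [α, tbkt, hs]
  have hαS : ∀ s, α s ≤ ENNReal.ofReal sig1
      ↔ s ≤ max (max (sig1 - b) 0 / r) (max (sig1 - L) 0 / R') := fun s => by
    rw [show α s = _ from Pi.inf_apply _ _ s, inf_le_iff,
      tbkt_ofReal_le_ofReal_iff (hL.trans hLb) hr, tbkt_ofReal_le_ofReal_iff hL hR', le_max_iff]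
  rw [hdev_mslcStep_top hα0 hαS, max_zero_max_sub_ite (by positivity) (by positivity)
    (posPart_sub_div_le_of_le_inflection hLb hr hrR)
    (posPart_sub_div_le_of_inflection_le hLb hr hrR)]
  simp

/-- delay bound for a shaped arrival curve `γ_{b,r} ∧ γ_{L,R'}` and a
single-step MSLC service curve with infinite rate `ρ₁ = +∞`. -/
theorem stmt7 (L b r R' tau1 sig1 : ℝ)
    (hL : 0 ≤ L) (hLb : L ≤ b) (hr : 0 < r) (hrR : r < R')
    (htau : 0 ≤ tau1) (hsig : 0 ≤ sig1) :
    hdev (tbkt (ENNReal.ofReal b) (ENNReal.ofReal r)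
            ⊓ tbkt (ENNReal.ofReal L) (ENNReal.ofReal R'))
         (mslcStep tau1 (ENNReal.ofReal sig1) ⊤)
      = ENNReal.ofReal
          (max 0 (max
            (tau1 * (if (b - L) / (R' - r) * r + b ≤ sig1 then 1 else 0)
              - max (sig1 - b) 0 / r)
            (tau1 * (if sig1 ≤ (b - L) / (R' - r) * r + b then 1 else 0)
              - max (sig1 - L) 0 / R'))) :=
  stmt7_general L b r R' tau1 sig1 hL hLb hr hrR
end
end

section
/- Let α = γ_{b,r} ∧ γ_{L,R'} with 0 ≤ L ≤ b and 0 ≤ r < R' < ∞, and let β = δ_D ⊗ ((δ_τ ⊗ I_σ ⊗ γ_{0,ρ}) ∧ δ_0) with D, τ, σ ≥ 0 and r < ρ ≤ R' < ∞. Suppose θ satisfies D ≤ θ ≤ D + τ − (b−L)/(R'−r), and set y = ((D + τ) − θ)·r + b. Then the nondecreasing lower bound of the FIFO leftover satisfies (β ⊖_θ α)↑ = δ_D ⊗ [ ((δ_{τ + [y−σ]⁺/(ρ−r)} ⊗ I_{[σ−y]⁺} ⊗ γ_{0,ρ−r}) ∧ δ_0) ∧ ((δ_{θ−D} ⊗ I_0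 ⊗ γ_{0,+∞}) ∧ δ_0) ], where [x]⁺ = max(x, 0). -/
open scoped ENNReal
open Classical

noncomputable section

/-!
For `t > θ` the leftover is at least `σ − y + (ρ − r)[t − D − τ]⁺`: the arrival curve lies below
its `γ_{b,r}` branch, and `b + r(u − θ) = y + r(u − D − τ)`. This bound is nondecreasing and constant
up to `D + τ`; from `D + τ` on, the condition on `θ` makes `γ_{b,r}` the active branch of the arrival
curve, so the leftover meets the bound there and its nondecreasing lower bound at `t` is attained at
`max t (D + τ)`. Writing `[σ − y + (ρ − r)[s − τ]⁺]⁺ = [σ − y]⁺ + (ρ − r)[s − τ − [y − σ]⁺/(ρ − r)]⁺`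
gives the MSLC form, and `(δ_{θ−D} ⊗ I_0 ⊗ γ_{0,∞}) ∧ δ_0 = δ_{θ−D}` accounts for the cut-off at `θ`.
-/

lemma tbkt_zero_eq (ρ : ℝ≥0∞) : tbkt 0 ρ = fun u => ρ * ENNReal.ofReal u := by
  funext u
  unfold tbkt
  split_ifs with hu
  · rw [ENNReal.ofReal_of_nonpos hu, mul_zero]
  · rw [zero_add]

lemma mconv_wndw_apply (f : ℝ → ℝ≥0∞) (σ : ℝ≥0∞) {t : ℝ} (ht : 0 ≤ t) :
    mconv f (wndw σ) t = f t + σ := by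
  unfold mconv
  rw [if_neg ht.not_gt]
  apply le_antisymm
  · refine iInf₂_le_of_le 0 ⟨le_rfl, ht⟩ ?_
    simp [wndw]
  · refine le_iInf₂ fun u hu => ?_
    rcases hu.1.eq_or_lt with rfl | hu0
    · simp [wndw]
    · simp [wndw, hu0.not_gt, hu0.ne']

lemma mconv_bdelay_apply_of_monotone {T : ℝ} (hT : 0 ≤ T) {f : ℝ → ℝ≥0∞} (hf : Monotone f)
    {t : ℝ} (ht : 0 ≤ t) : mconv (bdelay T) f t = f (max (t - T) 0) := by
  unfold mconv
  rw [if_neg ht.not_gt]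
  apply le_antisymm
  · refine iInf₂_le_of_le (max (t - T) 0) ⟨le_max_right _ _, max_le (by linarith) ht⟩ ?_
    rw [bdelay, if_pos (by rw [sub_le_comm]; exact le_max_left _ _), zero_add]
  · refine le_iInf₂ fun u hu => ?_
    unfold bdelay
    split_ifs with h
    · rw [zero_add]
      exact hf (max_le (by linarith) hu.1)
    · rw [top_add]
      exact le_top

lemma mconv_bdelay_apply {T : ℝ} (hT : 0 ≤ T) {f : ℝ → ℝ≥0∞} (hf : Monotone f)
    (hf0 : ∀ s ≤ 0, f s = 0) (t : ℝ) : mconv (bdelay T) f t = f (t - T) := by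
  rcases lt_or_ge t 0 with ht | ht
  · rw [mconv, if_pos ht, hf0 _ (by linarith)]
  rw [mconv_bdelay_apply_of_monotone hT hf ht]
  rcases le_total (t - T) 0 with h | h
  · rw [max_eq_right h, hf0 _ le_rfl, hf0 _ h]
  · rw [max_eq_left h]

lemma mconv_mconv_bdelay_wndw_apply {τ : ℝ} (hτ : 0 ≤ τ) (σ : ℝ≥0∞) {g : ℝ → ℝ≥0∞}
    (hg : Monotone g) {t : ℝ} (ht : 0 ≤ t) :
    mconv (mconv (bdelay τ) (wndw σ)) g t = σ + g (max (t - τ) 0) := by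
  have hshift :
      mconv (mconv (bdelay τ) (wndw σ)) g t = mconv (bdelay τ) (fun u => σ + g u) t := by
    simp only [mconv, if_neg ht.not_gt]
    refine iInf_congr fun u => iInf_congr fun hu => ?_
    rw [← mconv, mconv_wndw_apply _ _ (sub_nonneg.2 hu.2), add_assoc, add_comm σ]
  rw [hshift, mconv_bdelay_apply_of_monotone hτ (monotone_const.add hg) ht]

lemma mslcStep_apply {τ : ℝ} (hτ : 0 ≤ τ) (σ ρ : ℝ≥0∞) (t : ℝ) :
    mslcStep τ σ ρ t = if t ≤ 0 then 0 else σ + ρ * ENNReal.ofReal (t - τ) := by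
  have hg : Monotone (tbkt 0 ρ) := by
    rw [tbkt_zero_eq]
    exact ENNReal.ofReal_mono.const_mul' ρ
  unfold mslcStep
  rw [Pi.inf_apply]
  rcases lt_or_ge t 0 with ht | ht
  · rw [mconv, if_pos ht, if_pos ht.le, zero_min]
  rw [mconv_mconv_bdelay_wndw_apply hτ σ hg ht, tbkt_zero_eq]
  rcases ht.eq_or_lt with rfl | ht
  · simp [bdelay]
  · simp [bdelay, ht.not_ge]

lemma mslcStep_of_nonpos {τ : ℝ} (hτ : 0 ≤ τ) (σ ρ : ℝ≥0∞) {t : ℝ} (ht : t ≤ 0) :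
    mslcStep τ σ ρ t = 0 := by
  rw [mslcStep_apply hτ, if_pos ht]

lemma mslcStep_monotone {τ : ℝ} (hτ : 0 ≤ τ) (σ ρ : ℝ≥0∞) : Monotone (mslcStep τ σ ρ) := by
  intro s t hst
  simp only [mslcStep_apply hτ]
  split_ifs with hs ht ht
  · exact le_rfl
  · exact zero_le
  · exact absurd (hst.trans ht) hs
  · gcongr

lemma mslcStep_ofReal_of_pos {τ σ ρ t : ℝ} (hτ : 0 ≤ τ) (hσ : 0 ≤ σ) (hρ : 0 ≤ ρ) (ht : 0 < t) :
    mslcStep τ (ENNReal.ofReal σ) (ENNReal.ofReal ρ) t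
      = ENNReal.ofReal (σ + ρ * max (t - τ) 0) := by
  rw [mslcStep_apply hτ, if_neg ht.not_ge, ENNReal.ofReal_add hσ (by positivity),
    ENNReal.ofReal_mul hρ, ENNReal.ofReal_max, ENNReal.ofReal_zero, max_eq_left zero_le]

lemma mslcStep_zero_top {τ : ℝ} (hτ : 0 ≤ τ) : mslcStep τ 0 ⊤ = bdelay τ := by
  funext t
  rw [mslcStep_apply hτ, bdelay]
  split_ifs with h0 hτt hτt
  · rfl
  · linarith
  · rw [ENNReal.ofReal_of_nonpos (by linarith), mul_zero, zero_add]
  · rw [zero_add, ENNReal.top_mul (ENNReal.ofReal_pos.2 (by linarith)).ne']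

lemma tbkt_inf_tbkt_apply {b r L R s : ℝ} (hb : 0 ≤ b) (hr : 0 ≤ r) (hL : 0 ≤ L) (hR : 0 ≤ R)
    (hs : 0 < s) :
    (tbkt (ENNReal.ofReal b) (ENNReal.ofReal r) ⊓ tbkt (ENNReal.ofReal L) (ENNReal.ofReal R)) s
      = ENNReal.ofReal (min (b + r * s) (L + R * s)) := by
  rw [Pi.inf_apply, tbkt, tbkt, if_neg hs.not_ge, if_neg hs.not_ge, ENNReal.ofReal_min,
    ENNReal.ofReal_add hb (by positivity), ENNReal.ofReal_add hL (by positivity),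
    ENNReal.ofReal_mul hr, ENNReal.ofReal_mul hR]

lemma max_sub_add_mul_max_zero {p q c s τ : ℝ} (hc : 0 < c) :
    max (p - q + c * max (s - τ) 0) 0
      = max (p - q) 0 + c * max (s - (τ + max (q - p) 0 / c)) 0 := by
  rcases le_total q p with hqp | hpq
  · rw [max_eq_right (sub_nonpos.2 hqp), zero_div, add_zero, max_eq_left (sub_nonneg.2 hqp),
      max_eq_left (by positivity)]
  · rw [max_eq_left (sub_nonneg.2 hpq), max_eq_right (sub_nonpos.2 hpq), zero_add]
    have hk : 0 ≤ (q - p) / c := div_nonneg (sub_nonneg.2 hpq) hc.le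
    rcases le_total (s - τ) 0 with hx | hx
    · rw [max_eq_right hx, max_eq_right (by linarith), max_eq_right (by linarith), mul_zero]
    · rw [max_eq_left hx, mul_max_of_nonneg _ _ hc.le, mul_zero]
      congr 1
      field_simp
      ring

lemma ndlb_eq_of_le_of_eq {f : ℝ → ℝ≥0∞} {c : ℝ≥0∞} {t u₀ : ℝ} (hle : ∀ u, t ≤ u → c ≤ f u)
    (ht : t ≤ u₀) (heq : f u₀ = c) : ndlb f t = c :=
  le_antisymm (iInf₂_le_of_le u₀ ht heq.le) (le_iInf₂ hle)

lemma ndlb_leftover_of_le (β α : ℝ → ℝ≥0∞) {θ t : ℝ} (ht : t ≤ θ) :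
    ndlb (leftover β α θ) t = 0 :=
  nonpos_iff_eq_zero.1 (iInf₂_le_of_le t Set.self_mem_Ici (by rw [leftover, if_pos ht]))

section FifoLeftover

variable {D τ σ ρ b r L R θ : ℝ}

lemma leftover_apply_of_lt (hD : 0 ≤ D) (hτ : 0 ≤ τ) (hσ : 0 ≤ σ) (hρ : 0 ≤ ρ) (hb : 0 ≤ b)
    (hr : 0 ≤ r) (hL : 0 ≤ L) (hR : 0 ≤ R) (hθ : D ≤ θ) {u : ℝ} (hu : θ < u) :
    leftover (mconv (bdelay D) (mslcStep τ (ENNReal.ofReal σ) (ENNReal.ofReal ρ)))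
        (tbkt (ENNReal.ofReal b) (ENNReal.ofReal r) ⊓ tbkt (ENNReal.ofReal L) (ENNReal.ofReal R))
        θ u
      = ENNReal.ofReal (σ + ρ * max (u - D - τ) 0 - min (b + r * (u - θ)) (L + R * (u - θ))) := by
  have huθ : 0 < u - θ := sub_pos.2 hu
  rw [leftover, if_neg hu.not_ge,
    mconv_bdelay_apply hD (mslcStep_monotone hτ _ _) (fun _ => mslcStep_of_nonpos hτ _ _),
    mslcStep_ofReal_of_pos hτ hσ hρ (by linarith), tbkt_inf_tbkt_apply hb hr hL hR huθ,
    ENNReal.ofReal_sub _ (le_min (by positivity) (by positivity))]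

lemma ndlb_leftover_eq (hD : 0 ≤ D) (hτ : 0 ≤ τ) (hσ : 0 ≤ σ) (hb : 0 ≤ b) (hr : 0 ≤ r)
    (hL : 0 ≤ L) (hrρ : r ≤ ρ) (hrR : r < R) (hθ1 : D ≤ θ) (hθ2 : θ ≤ D + τ - (b - L) / (R - r))
    {t : ℝ} (ht : θ < t) :
    ndlb (leftover (mconv (bdelay D) (mslcStep τ (ENNReal.ofReal σ) (ENNReal.ofReal ρ)))
        (tbkt (ENNReal.ofReal b) (ENNReal.ofReal r) ⊓ tbkt (ENNReal.ofReal L) (ENNReal.ofReal R))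
        θ) t
      = ENNReal.ofReal (σ - ((D + τ - θ) * r + b) + (ρ - r) * max (t - D - τ) 0) := by
  have hρ : 0 ≤ ρ := hr.trans hrρ
  have hR : 0 ≤ R := hr.trans hrR.le
  set u₀ := max t (D + τ) with hu₀
  refine ndlb_eq_of_le_of_eq (u₀ := u₀) (fun u htu => ?_) (le_max_left _ _) ?_
  · rw [leftover_apply_of_lt hD hτ hσ hρ hb hr hL hR hθ1 (ht.trans_le htu)]
    apply ENNReal.ofReal_le_ofReal
    have hMtu : max (t - D - τ) 0 ≤ max (u - D - τ) 0 := by gcongr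
    linarith [min_le_left (b + r * (u - θ)) (L + R * (u - θ)), le_max_left (u - D - τ) 0,
      mul_le_mul_of_nonneg_left hMtu (sub_nonneg.2 hrρ),
      mul_le_mul_of_nonneg_left (le_max_left (u - D - τ) 0) hr]
  · have hαb : b + r * (u₀ - θ) ≤ L + R * (u₀ - θ) := by
      have hbL : b - L ≤ (D + τ - θ) * (R - r) := (div_le_iff₀ (sub_pos.2 hrR)).1 (by linarith)
      linarith [mul_le_mul_of_nonneg_left (by linarith [le_max_right t (D + τ)] :
        D + τ - θ ≤ u₀ - θ) (sub_pos.2 hrR).le]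
    have hMt : max (t - D - τ) 0 = u₀ - D - τ := by
      rcases le_total t (D + τ) with h | h
      · rw [max_eq_right (by linarith), hu₀, max_eq_right h, sub_sub, sub_self]
      · rw [max_eq_left (by linarith), hu₀, max_eq_left h]
    rw [leftover_apply_of_lt hD hτ hσ hρ hb hr hL hR hθ1 (ht.trans_le (le_max_left _ _)),
      min_eq_left hαb, hMt, max_eq_left (by linarith [le_max_right t (D + τ)])]
    congr 1
    ring

end FifoLeftover

theorem stmt15_general (L b r R' D tau sig rho θ : ℝ)
    (hL : 0 ≤ L) (hLb : L ≤ b) (hr : 0 ≤ r) (hrR : r < R')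
    (hD : 0 ≤ D) (htau : 0 ≤ tau) (hsig : 0 ≤ sig) (hrrho : r < rho)
    (hθ1 : D ≤ θ) (hθ2 : θ ≤ D + tau - (b - L) / (R' - r)) :
    ndlb (leftover
            (mconv (bdelay D) (mslcStep tau (ENNReal.ofReal sig) (ENNReal.ofReal rho)))
            (tbkt (ENNReal.ofReal b) (ENNReal.ofReal r)
              ⊓ tbkt (ENNReal.ofReal L) (ENNReal.ofReal R'))
            θ)
      = mconv (bdelay D)
          (mslcStep (tau + max (((D + tau) - θ) * r + b - sig) 0 / (rho - r))
              (ENNReal.ofReal (max (sig - (((D + tau) - θ) * r + b)) 0))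
              (ENNReal.ofReal (rho - r))
            ⊓ mslcStep (θ - D) 0 ⊤) := by
  have hc : 0 < rho - r := sub_pos.2 hrrho
  have hT : 0 ≤ tau + max (((D + tau) - θ) * r + b - sig) 0 / (rho - r) :=
    add_nonneg htau (div_nonneg (le_max_right _ _) hc.le)
  have hθD : 0 ≤ θ - D := sub_nonneg.2 hθ1
  funext t
  rw [mconv_bdelay_apply hD ((mslcStep_monotone hT _ _).inf (mslcStep_monotone hθD _ _))
      (fun s hs => by simp [mslcStep_of_nonpos hT _ _ hs, mslcStep_of_nonpos hθD _ _ hs]),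
    Pi.inf_apply, mslcStep_zero_top hθD, bdelay]
  rcases le_or_gt t θ with ht | ht
  · rw [ndlb_leftover_of_le _ _ ht, if_pos (by linarith), min_zero]
  · rw [ndlb_leftover_eq hD htau hsig (hL.trans hLb) hr hL hrrho.le hrR hθ1 hθ2 ht,
      if_neg (by linarith), inf_top_eq,
      mslcStep_ofReal_of_pos hT (le_max_right _ _) hc.le (by linarith),
      ← max_sub_add_mul_max_zero hc, ENNReal.ofReal_max, ENNReal.ofReal_zero]
    exact (max_eq_left zero_le).symm

/-- symbolic nondecreasing lower bound of the FIFO leftover, case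
`D ≤ θ ≤ D + τ − (b−L)/(R'−r)`, with `y = ((D+τ) − θ)·r + b`. -/
theorem stmt15 (L b r R' D tau sig rho θ : ℝ)
    (hL : 0 ≤ L) (hLb : L ≤ b) (hr : 0 ≤ r) (hrR : r < R')
    (hD : 0 ≤ D) (htau : 0 ≤ tau) (hsig : 0 ≤ sig) (hrrho : r < rho) (hrhoR : rho ≤ R')
    (hθ1 : D ≤ θ) (hθ2 : θ ≤ D + tau - (b - L) / (R' - r)) :
    ndlb (leftover
            (mconv (bdelay D) (mslcStep tau (ENNReal.ofReal sig) (ENNReal.ofReal rho)))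
            (tbkt (ENNReal.ofReal b) (ENNReal.ofReal r)
              ⊓ tbkt (ENNReal.ofReal L) (ENNReal.ofReal R'))
            θ)
      = mconv (bdelay D)
          (mslcStep (tau + max (((D + tau) - θ) * r + b - sig) 0 / (rho - r))
              (ENNReal.ofReal (max (sig - (((D + tau) - θ) * r + b)) 0))
              (ENNReal.ofReal (rho - r))
            ⊓ mslcStep (θ - D) 0 ⊤) :=
  stmt15_general L b r R' D tau sig rho θ hL hLb hr hrR hD htau hsig hrrho hθ1 hθ2
end
end
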